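/- Let p > 1, Λ > 0, and let y : Ω → ℝ satisfy 0 ≤ y(x) ≤ ‖y‖_∞ with Λ - ‖y‖_∞ > Λ/2 and (Λ/2)^{p-1} - (Λ/3)^{p-1} > 1. Then for every x, Λ^{p-1}(-1 + y(x)^{p-1} + (Λ - y(x))^{p-1}) ≥ (Λ²/3)^{p-1}. -/
import Mathlib

theorem stmt_1 {Ω : Type*} (p Λ M : ℝ) (y : Ω → ℝ) (hp : 1 < p) (hΛ : 0 < Λ)
    (hy : ∀ x, 0 ≤ y x ∧ y x ≤ M) (hM : Λ - M > Λ / 2)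
    (hpow : (Λ / 2) ^ (p - 1) - (Λ / 3) ^ (p - 1) > 1) :
    ∀ x, Λ ^ (p - 1) * (-1 + y x ^ (p - 1) + (Λ - y x) ^ (p - 1)) ≥ (Λ ^ 2 / 3) ^ (p - 1) := by
  intro x
  obtain ⟨h0, h1⟩ := hy x
  have h2 : Λ / 2 ≤ Λ - y x := by linarith
  have hmono : (Λ / 2) ^ (p - 1) ≤ (Λ - y x) ^ (p - 1) :=
    Real.rpow_le_rpow (by positivity) h2 (by linarith)
  have hy0 : (0:ℝ) ≤ y x ^ (p - 1) := Real.rpow_nonneg h0 _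
  have key : (Λ / 3) ^ (p - 1) ≤ -1 + y x ^ (p - 1) + (Λ - y x) ^ (p - 1) := by linarith
  rw [show Λ ^ 2 / 3 = Λ * (Λ / 3) by ring, Real.mul_rpow hΛ.le (by positivity)]
  exact mul_le_mul_of_nonneg_left key (Real.rpow_nonneg hΛ.le _)
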